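/- The unique minimizer of D_KL(π | K) over couplings π ∈ Π(μ,ν), for a kernel K with strictly positive entries, has the form π = diag(v) K diag(w) for some strictly positive vectors v, w (Sinkhorn scaling form). -/
import Mathlib

open Matrix BigOperators

/-- The set of couplings of two probability vectors on finite sets. -/
def Couplings {n m : ℕ} (μ : Fin n → ℝ) (ν : Fin m → ℝ) :
    Set (Matrix (Fin n) (Fin m) ℝ) :=
  {π | (∀ i j, 0 ≤ π i j) ∧ (∀ i, ∑ j, π i j = μ i) ∧ (∀ j, ∑ i, π i j = ν j)}

/-- KL divergence of a coupling with respect to a kernel matrix. -/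
noncomputable def KLdiv {n m : ℕ} (π K : Matrix (Fin n) (Fin m) ℝ) : ℝ :=
  ∑ i, ∑ j, π i j * (Real.log (π i j / K i j) - 1)

lemma phi_diff_le' {x y : ℝ} (hx : 0 ≤ x) (hy : 0 < y) :
    y * Real.log y - x * Real.log x ≤ (y - x) * (Real.log y + 1) := by
  rcases hx.eq_or_lt with h | h
  · rw [← h]
    simp only [Real.log_zero, mul_zero, sub_zero]
    nlinarith [hy]
  · have hd : Real.log (y / x) = Real.log y - Real.log x := Real.log_div hy.ne' h.ne'
    have hlog : Real.log (y / x) ≤ y / x - 1 := Real.log_le_sub_one_of_pos (div_pos hy h)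
    have h2 : x * Real.log (y / x) ≤ x * (y / x - 1) := mul_le_mul_of_nonneg_left hlog h.le
    have h3 : x * (y / x - 1) = y - x := by field_simp
    nlinarith [h2, h3, hd]

lemma G_diff_le' {x k t : ℝ} (hx : 0 ≤ x) (hxt : 0 < x + t) (hk : 0 < k) :
    (x + t) * (Real.log ((x + t) / k) - 1) - x * (Real.log (x / k) - 1)
      ≤ t * (Real.log (x + t) - Real.log k) := by
  have e1 : Real.log ((x + t) / k) = Real.log (x + t) - Real.log k :=
    Real.log_div hxt.ne' hk.ne'
  have e2 : x * (Real.log (x / k) - 1) = x * Real.log x - x * (Real.log k + 1) := by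
    rcases hx.eq_or_lt with h | h
    · rw [← h]; simp
    · rw [Real.log_div h.ne' hk.ne']; ring
  have h := phi_diff_le' hx hxt
  rw [e1, e2]
  nlinarith [h]

def pert {n m : ℕ} (π : Matrix (Fin n) (Fin m) ℝ) (i i' : Fin n) (j j' : Fin m)
    (t : ℝ) : Matrix (Fin n) (Fin m) ℝ :=
  fun a b => π a b +
    t * (((if a = i then (1:ℝ) else 0) - (if a = i' then 1 else 0)) *
         ((if b = j then (1:ℝ) else 0) - (if b = j' then 1 else 0)))

lemma pert_mem {n m : ℕ} {μ : Fin n → ℝ} {ν : Fin m → ℝ}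
    {π : Matrix (Fin n) (Fin m) ℝ} (hπ : π ∈ Couplings μ ν)
    {i i' : Fin n} {j j' : Fin m} (hii' : i ≠ i') (hjj' : j ≠ j') {t : ℝ}
    (h1 : 0 ≤ π i j + t) (h2 : 0 ≤ π i j' - t) (h3 : 0 ≤ π i' j - t)
    (h4 : 0 ≤ π i' j' + t) :
    pert π i i' j j' t ∈ Couplings μ ν := by
  obtain ⟨hpos, hrow, hcol⟩ := hπ
  refine ⟨?_, ?_, ?_⟩
  · intro a b
    by_cases ha : a = i <;> by_cases ha' : a = i' <;>
      by_cases hb : b = j <;> by_cases hb' : b = j' <;>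
      simp_all [pert]
  · intro a
    have hC : ∑ b : Fin m, ((if b = j then (1:ℝ) else 0) - (if b = j' then 1 else 0)) = 0 := by
      rw [Finset.sum_sub_distrib]
      simp [Finset.sum_ite_eq', hjj']
    simp only [pert]
    rw [Finset.sum_add_distrib, ← Finset.mul_sum, ← Finset.mul_sum, hC, mul_zero, mul_zero,
      add_zero]
    exact hrow a
  · intro b
    have hR : ∑ a : Fin n, ((if a = i then (1:ℝ) else 0) - (if a = i' then 1 else 0)) = 0 := by
      rw [Finset.sum_sub_distrib]
      simp [Finset.sum_ite_eq', hii']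
    simp only [pert]
    rw [Finset.sum_add_distrib]
    have : ∑ a : Fin n, t * (((if a = i then (1:ℝ) else 0) - if a = i' then 1 else 0) *
        ((if b = j then (1:ℝ) else 0) - if b = j' then 1 else 0)) =
        t * ((if b = j then (1:ℝ) else 0) - if b = j' then 1 else 0) *
          ∑ a : Fin n, ((if a = i then (1:ℝ) else 0) - (if a = i' then 1 else 0)) := by
      rw [Finset.mul_sum]; apply Finset.sum_congr rfl; intro a _; ring
    rw [this, hR, mul_zero, add_zero]
    exact hcol b

lemma KLdiv_pert {n m : ℕ} (π K : Matrix (Fin n) (Fin m) ℝ)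
    {i i' : Fin n} {j j' : Fin m} (hii' : i ≠ i') (hjj' : j ≠ j') (t : ℝ) :
    KLdiv (pert π i i' j j' t) K =
      KLdiv π K
      + ((π i j + t) * (Real.log ((π i j + t) / K i j) - 1)
          - π i j * (Real.log (π i j / K i j) - 1))
      + ((π i' j' + t) * (Real.log ((π i' j' + t) / K i' j') - 1)
          - π i' j' * (Real.log (π i' j' / K i' j') - 1))
      + ((π i j' - t) * (Real.log ((π i j' - t) / K i j') - 1)
          - π i j' * (Real.log (π i j' / K i j') - 1))
      + ((π i' j - t) * (Real.log ((π i' j - t) / K i' j) - 1)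
          - π i' j * (Real.log (π i' j / K i' j) - 1)) := by
  set σ := pert π i i' j j' t with hσ
  set D : Fin n → Fin m → ℝ := fun a b =>
    σ a b * (Real.log (σ a b / K a b) - 1) - π a b * (Real.log (π a b / K a b) - 1) with hD
  have hσeq : ∀ a b, a ≠ i → a ≠ i' → σ a b = π a b := by
    intro a b ha ha'
    simp [hσ, pert, ha, ha']
  have hσeq' : ∀ a b, b ≠ j → b ≠ j' → σ a b = π a b := by
    intro a b hb hb'
    simp [hσ, pert, hb, hb']
  have hsplit : KLdiv σ K = KLdiv π K + ∑ a, ∑ b, D a b := by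
    simp only [KLdiv, hD, ← Finset.sum_add_distrib]
    apply Finset.sum_congr rfl; intro a _
    apply Finset.sum_congr rfl; intro b _
    ring
  have hrow0 : ∀ a, a ∉ ({i, i'} : Finset (Fin n)) → ∑ b, D a b = 0 := by
    intro a ha
    simp only [Finset.mem_insert, Finset.mem_singleton, not_or] at ha
    apply Finset.sum_eq_zero
    intro b _
    simp [hD, hσeq a b ha.1 ha.2]
  have houter : ∑ a, ∑ b, D a b = ∑ a ∈ ({i, i'} : Finset (Fin n)), ∑ b, D a b := by
    refine (Finset.sum_subset (Finset.subset_univ _) ?_).symm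
    intro a _ ha
    exact hrow0 a ha
  have hinner : ∀ a, ∑ b, D a b = D a j + D a j' := by
    intro a
    have : ∑ b, D a b = ∑ b ∈ ({j, j'} : Finset (Fin m)), D a b := by
      refine (Finset.sum_subset (Finset.subset_univ _) ?_).symm
      intro b _ hb
      simp only [Finset.mem_insert, Finset.mem_singleton, not_or] at hb
      simp [hD, hσeq' a b hb.1 hb.2]
    rw [this, Finset.sum_pair hjj']
  have hv1 : σ i j = π i j + t := by simp [hσ, pert, hii', hjj']
  have hv2 : σ i j' = π i j' - t := by
    simp [hσ, pert, hii', hjj'.symm]; ring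
  have hv3 : σ i' j = π i' j - t := by
    simp [hσ, pert, hii'.symm, hjj']; ring
  have hv4 : σ i' j' = π i' j' + t := by
    simp [hσ, pert, hii'.symm, hjj'.symm]
  rw [hsplit, houter, Finset.sum_pair hii', hinner, hinner]
  simp only [hD, hv1, hv2, hv3, hv4]
  ring

lemma master {n m : ℕ} {μ : Fin n → ℝ} {ν : Fin m → ℝ}
    {K : Matrix (Fin n) (Fin m) ℝ} (hK_pos : ∀ i j, 0 < K i j)
    {π : Matrix (Fin n) (Fin m) ℝ} (hπ : π ∈ Couplings μ ν)
    (hmin : ∀ π' ∈ Couplings μ ν, KLdiv π K ≤ KLdiv π' K)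
    {i i' : Fin n} {j j' : Fin m} (hii' : i ≠ i') (hjj' : j ≠ j') {t : ℝ}
    (h1 : 0 < π i j + t) (h2 : 0 < π i j' - t) (h3 : 0 < π i' j - t)
    (h4 : 0 < π i' j' + t) :
    0 ≤ t * (Real.log (π i j + t) + Real.log (π i' j' + t)
      - Real.log (π i j' - t) - Real.log (π i' j - t)
      - (Real.log (K i j) + Real.log (K i' j')
        - Real.log (K i j') - Real.log (K i' j))) := by
  have hpos := hπ.1
  have hm := hmin _ (pert_mem hπ hii' hjj' h1.le h2.le h3.le h4.le)
  rw [KLdiv_pert π K hii' hjj' t] at hm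
  have b1 := G_diff_le' (hpos i j) h1 (hK_pos i j)
  have b4 := G_diff_le' (hpos i' j') h4 (hK_pos i' j')
  have b2 : (π i j' - t) * (Real.log ((π i j' - t) / K i j') - 1)
      - π i j' * (Real.log (π i j' / K i j') - 1)
      ≤ (-t) * (Real.log (π i j' - t) - Real.log (K i j')) := by
    have := G_diff_le' (t := -t) (hpos i j') (by linarith) (hK_pos i j')
    simpa [sub_eq_add_neg] using this
  have b3 : (π i' j - t) * (Real.log ((π i' j - t) / K i' j) - 1)
      - π i' j * (Real.log (π i' j / K i' j) - 1)
      ≤ (-t) * (Real.log (π i' j - t) - Real.log (K i' j)) := by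
    have := G_diff_le' (t := -t) (hpos i' j) (by linarith) (hK_pos i' j)
    simpa [sub_eq_add_neg] using this
  nlinarith [b1, b2, b3, b4, hm]

theorem sinkhorn_scaling_form (n m : ℕ)
    (μ : Fin n → ℝ) (ν : Fin m → ℝ)
    (hμ_pos : ∀ i, 0 < μ i) (hν_pos : ∀ j, 0 < ν j)
    (hμ_sum : ∑ i, μ i = 1) (hν_sum : ∑ j, ν j = 1)
    (K : Matrix (Fin n) (Fin m) ℝ) (hK_pos : ∀ i j, 0 < K i j)
    (π : Matrix (Fin n) (Fin m) ℝ)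
    (hπ : π ∈ Couplings μ ν)
    (hmin : ∀ π' ∈ Couplings μ ν, KLdiv π K ≤ KLdiv π' K) :
    ∃ (v : Fin n → ℝ) (w : Fin m → ℝ), (∀ i, 0 < v i) ∧ (∀ j, 0 < w j) ∧
      π = Matrix.diagonal v * K * Matrix.diagonal w := by
  have hn : 0 < n := by
    rcases Nat.eq_zero_or_pos n with h | h
    · exfalso; subst h; simp at hμ_sum
    · exact h
  have hm0 : 0 < m := by
    rcases Nat.eq_zero_or_pos m with h | h
    · exfalso; subst h; simp at hν_sum
    · exact h
  -- Step 1: strict positivity of the minimizer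
  have hppos : ∀ a b, 0 < π a b := by
    intro i j
    rcases (hπ.1 i j).eq_or_lt with hz | h
    · exfalso
      obtain ⟨j', hj'⟩ : ∃ b, 0 < π i b := by
        by_contra hc; push_neg at hc
        have h0 : ∑ b, π i b ≤ 0 := Finset.sum_nonpos fun b _ => hc b
        rw [hπ.2.1 i] at h0; linarith [hμ_pos i]
      obtain ⟨i', hi'⟩ : ∃ a, 0 < π a j := by
        by_contra hc; push_neg at hc
        have h0 : ∑ a, π a j ≤ 0 := Finset.sum_nonpos fun a _ => hc a
        rw [hπ.2.2 j] at h0; linarith [hν_pos j]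
      have hjj' : j ≠ j' := by rintro rfl; rw [← hz] at hj'; exact lt_irrefl _ hj'
      have hii' : i ≠ i' := by rintro rfl; rw [← hz] at hi'; exact lt_irrefl _ hi'
      set t0 : ℝ := min (π i j') (π i' j) / 2 with ht0def
      have ht0 : 0 < t0 := div_pos (lt_min hj' hi') two_pos
      have hb1 : t0 ≤ π i j' / 2 := by
        rw [ht0def]; have := min_le_left (π i j') (π i' j); linarith
      have hb2 : t0 ≤ π i' j / 2 := by
        rw [ht0def]; have := min_le_right (π i j') (π i' j); linarith
      set C : ℝ := Real.log (π i' j' + t0) - Real.log (π i j' - t0) - Real.log (π i' j - t0)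
        - (Real.log (K i j) + Real.log (K i' j') - Real.log (K i j') - Real.log (K i' j))
        with hCdef
      set t : ℝ := min t0 (Real.exp (-C - 1)) with htdef
      have ht : 0 < t := lt_min ht0 (Real.exp_pos _)
      have htt0 : t ≤ t0 := min_le_left _ _
      have h1 : 0 < π i j + t := by rw [← hz]; linarith
      have h2 : 0 < π i j' - t := by linarith
      have h3 : 0 < π i' j - t := by linarith
      have h4 : 0 < π i' j' + t := by linarith [hπ.1 i' j']
      have hmas := master hK_pos hπ hmin hii' hjj' h1 h2 h3 h4
      have l1 : Real.log (π i j + t) = Real.log t := by rw [← hz, zero_add]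
      have l2 : Real.log (π i' j' + t) ≤ Real.log (π i' j' + t0) := by
        apply Real.log_le_log (by linarith) (by linarith)
      have l3 : Real.log (π i j' - t0) ≤ Real.log (π i j' - t) := by
        apply Real.log_le_log (by linarith) (by linarith)
      have l4 : Real.log (π i' j - t0) ≤ Real.log (π i' j - t) := by
        apply Real.log_le_log (by linarith) (by linarith)
      have hFle : Real.log (π i j + t) + Real.log (π i' j' + t)
          - Real.log (π i j' - t) - Real.log (π i' j - t)
          - (Real.log (K i j) + Real.log (K i' j')
            - Real.log (K i j') - Real.log (K i' j)) ≤ Real.log t + C := by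
        rw [hCdef, l1]; linarith
      have hlogt : Real.log t ≤ -C - 1 := by
        calc Real.log t ≤ Real.log (Real.exp (-C - 1)) :=
              Real.log_le_log ht (min_le_right _ _)
          _ = -C - 1 := Real.log_exp _
      have hub : t * (Real.log (π i j + t) + Real.log (π i' j' + t)
          - Real.log (π i j' - t) - Real.log (π i' j - t)
          - (Real.log (K i j) + Real.log (K i' j')
            - Real.log (K i j') - Real.log (K i' j))) ≤ t * (Real.log t + C) :=
        mul_le_mul_of_nonneg_left hFle ht.le
      have hub2 : t * (Real.log t + C) ≤ t * (-1) :=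
        mul_le_mul_of_nonneg_left (by linarith) ht.le
      linarith
    · exact h
  -- Step 2: cycle condition
  have hcycle : ∀ (i i' : Fin n) (j j' : Fin m),
      Real.log (π i j) + Real.log (π i' j') - Real.log (π i j') - Real.log (π i' j) =
      Real.log (K i j) + Real.log (K i' j') - Real.log (K i j') - Real.log (K i' j) := by
    intro i i' j j'
    rcases eq_or_ne i i' with rfl | hii'
    · ring
    rcases eq_or_ne j j' with rfl | hjj'
    · ring
    set LK : ℝ := Real.log (K i j) + Real.log (K i' j')
      - Real.log (K i j') - Real.log (K i' j) with hLK
    set F : ℝ → ℝ := fun t => Real.log (π i j + t) + Real.log (π i' j' + t)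
      - Real.log (π i j' - t) - Real.log (π i' j - t) - LK with hF
    set t0 : ℝ := min (min (π i j) (π i' j')) (min (π i j') (π i' j)) / 2 with ht0def
    have ht0 : 0 < t0 :=
      div_pos (lt_min (lt_min (hppos i j) (hppos i' j'))
        (lt_min (hppos i j') (hppos i' j))) two_pos
    have hm1 : t0 ≤ π i j / 2 := by
      rw [ht0def]
      have h1 := min_le_left (min (π i j) (π i' j')) (min (π i j') (π i' j))
      have h2 := min_le_left (π i j) (π i' j')
      linarith
    have hm2 : t0 ≤ π i' j' / 2 := by
      rw [ht0def]
      have h1 := min_le_left (min (π i j) (π i' j')) (min (π i j') (π i' j))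
      have h2 := min_le_right (π i j) (π i' j')
      linarith
    have hm3 : t0 ≤ π i j' / 2 := by
      rw [ht0def]
      have h1 := min_le_right (min (π i j) (π i' j')) (min (π i j') (π i' j))
      have h2 := min_le_left (π i j') (π i' j)
      linarith
    have hm4 : t0 ≤ π i' j / 2 := by
      rw [ht0def]
      have h1 := min_le_right (min (π i j) (π i' j')) (min (π i j') (π i' j))
      have h2 := min_le_right (π i j') (π i' j)
      linarith
    have hFmaster : ∀ s : ℝ, |s| ≤ t0 → 0 ≤ s * F s := by
      intro s hs
      obtain ⟨hs1, hs2⟩ := abs_le.mp hs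
      have h1 : 0 < π i j + s := by linarith [hppos i j]
      have h4 : 0 < π i' j' + s := by linarith [hppos i' j']
      have h2 : 0 < π i j' - s := by linarith [hppos i j']
      have h3 : 0 < π i' j - s := by linarith [hppos i' j]
      have := master hK_pos hπ hmin hii' hjj' h1 h2 h3 h4
      simpa only [hF, hLK] using this
    have hcont : ContinuousAt F 0 := by
      have c1 : ContinuousAt (fun s : ℝ => Real.log (π i j + s)) 0 := by
        apply ContinuousAt.log
        · exact (continuous_const.add continuous_id).continuousAt
        · simpa using (hppos i j).ne'
      have c2 : ContinuousAt (fun s : ℝ => Real.log (π i' j' + s)) 0 := by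
        apply ContinuousAt.log
        · exact (continuous_const.add continuous_id).continuousAt
        · simpa using (hppos i' j').ne'
      have c3 : ContinuousAt (fun s : ℝ => Real.log (π i j' - s)) 0 := by
        apply ContinuousAt.log
        · exact (continuous_const.sub continuous_id).continuousAt
        · simpa using (hppos i j').ne'
      have c4 : ContinuousAt (fun s : ℝ => Real.log (π i' j - s)) 0 := by
        apply ContinuousAt.log
        · exact (continuous_const.sub continuous_id).continuousAt
        · simpa using (hppos i' j).ne'
      exact (((c1.add c2).sub c3).sub c4).sub continuousAt_const
    have hge : 0 ≤ F 0 := by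
      have htend : Filter.Tendsto F (nhdsWithin 0 (Set.Ioi 0)) (nhds (F 0)) :=
        hcont.continuousWithinAt.tendsto
      refine ge_of_tendsto htend ?_
      filter_upwards [Ioc_mem_nhdsGT_of_mem (Set.left_mem_Ico.mpr ht0)] with s hs
      by_contra hneg; push_neg at hneg
      have hlt : s * F s < 0 := mul_neg_of_pos_of_neg hs.1 hneg
      have := hFmaster s (by rw [abs_of_pos hs.1]; exact hs.2)
      linarith
    have hle : F 0 ≤ 0 := by
      have htend : Filter.Tendsto F (nhdsWithin 0 (Set.Iio 0)) (nhds (F 0)) :=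
        hcont.continuousWithinAt.tendsto
      refine le_of_tendsto htend ?_
      filter_upwards [Ico_mem_nhdsLT_of_mem
        (Set.right_mem_Ioc.mpr (by linarith : -t0 < 0))] with s hs
      by_contra hp; push_neg at hp
      have hlt : s * F s < 0 := mul_neg_of_neg_of_pos hs.2 hp
      have := hFmaster s (by rw [abs_of_neg hs.2]; linarith [hs.1])
      linarith
    have hF0 : F 0 = 0 := le_antisymm hle hge
    have : Real.log (π i j) + Real.log (π i' j')
        - Real.log (π i j') - Real.log (π i' j) - LK = 0 := by
      simpa [hF] using hF0
    rw [hLK] at this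
    linarith
  -- Step 3: construct the scalings
  have i0 : Fin n := ⟨0, hn⟩
  have j0 : Fin m := ⟨0, hm0⟩
  refine ⟨fun a => Real.exp (Real.log (π a j0) - Real.log (K a j0)
      - (Real.log (π i0 j0) - Real.log (K i0 j0))),
    fun b => Real.exp (Real.log (π i0 b) - Real.log (K i0 b)),
    fun a => Real.exp_pos _, fun b => Real.exp_pos _, ?_⟩
  ext a b
  rw [Matrix.mul_assoc]
  simp only [Matrix.diagonal_mul, Matrix.mul_diagonal]
  have hc := hcycle a i0 b j0
  have hexp : Real.exp (Real.log (π a j0) - Real.log (K a j0)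
      - (Real.log (π i0 j0) - Real.log (K i0 j0))
      + (Real.log (π i0 b) - Real.log (K i0 b)))
      = Real.exp (Real.log (π a b) - Real.log (K a b)) := by
    congr 1
    linarith
  have hval : Real.exp (Real.log (π a b) - Real.log (K a b)) = π a b / K a b := by
    rw [Real.exp_sub, Real.exp_log (hppos a b), Real.exp_log (hK_pos a b)]
  calc π a b
      = Real.exp (Real.log (π a j0) - Real.log (K a j0)
          - (Real.log (π i0 j0) - Real.log (K i0 j0))) *
        (K a b * Real.exp (Real.log (π i0 b) - Real.log (K i0 b))) := by
        rw [show Real.exp (Real.log (π a j0) - Real.log (K a j0)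
            - (Real.log (π i0 j0) - Real.log (K i0 j0))) *
            (K a b * Real.exp (Real.log (π i0 b) - Real.log (K i0 b)))
          = K a b * (Real.exp (Real.log (π a j0) - Real.log (K a j0)
            - (Real.log (π i0 j0) - Real.log (K i0 j0))
            + (Real.log (π i0 b) - Real.log (K i0 b)))) by
            rw [Real.exp_add]; ring]
        rw [hexp, hval, mul_comm (K a b) (π a b / K a b), div_mul_cancel₀ _ (hK_pos a b).ne']
    _ = _ := rfl
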